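/- arXiv:2306.05131 — 6 statements merged into one kernel-verified Lean document; each statement's English description precedes it below -/
import Mathlib

section
/- Let $\{v_\ell\}_{\ell=1}^{N+1}$ be a strictly increasing sequence of extended reals and $\{p_\ell\}_{\ell=1}^{N+1}$ nonnegative weights summing to 1. If $V$ is a random variable with distribution $\sum_{\ell=1}^{N+1} p_\ell \delta_{v_\ell}$, then for every $\alpha \in [0,1)$, $1-\alpha \le \mathbb{P}(V \le q_{1-\alpha}) < 1-\alpha + \max_{k} p_k$, where $q_{1-\alpha} = \inf\{t : \mathbb{P}(V \le t) \ge 1-\alpha\}$ is the $(1-\alpha)$-quantile. -/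
/-!
The distribution function `F` of `∑ₖ pₖ δ_{vₖ}` is a right-continuous step function, so the
quantile `q = inf {t | 1 - α ≤ F t}` is attained: `1 - α ≤ F q`. Every atom strictly below `q`
lies outside that set, so the mass strictly below `q` is `< 1 - α`; `F q` exceeds it by the
mass of the single atom at `q`, which is at most `maxₖ pₖ`.
-/

open Finset

section AtomCDF

variable {ι β : Type*} [Fintype ι] [CompleteLinearOrder β] {v : ι → β} {p : ι → ℝ}

noncomputable def atomCDF (v : ι → β) (p : ι → ℝ) (t : β) : ℝ := ∑ k with v k ≤ t, p k

theorem le_atomCDF_sInf (hp : ∀ k, 0 ≤ p k) {c : ℝ} (hc : c ≤ ∑ k, p k) :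
    c ≤ atomCDF v p (sInf {t | c ≤ atomCDF v p t}) := by
  set q := sInf {t | c ≤ atomCDF v p t}
  by_cases hT : ∃ k, q < v k
  · -- `atomCDF v p` is constant on `[q, m)`, where `m` is the first atom above `q`.
    obtain ⟨m, hm, hmin⟩ := exists_min_image {k | q < v k} v
      (by simpa [Finset.Nonempty] using hT)
    obtain ⟨t, ht, htm⟩ := sInf_lt_iff.mp (mem_filter.mp hm).2
    refine ht.trans (sum_le_sum_of_subset_of_nonneg (fun k hk => ?_) fun k _ _ => hp k)
    simp only [mem_filter, mem_univ, true_and] at hk ⊢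
    by_contra! hqk
    exact (hk.trans_lt htm).not_ge (hmin k (by simpa using hqk))
  · push Not at hT
    simpa [atomCDF, hT] using hc

theorem exists_atomCDF_eq_sum_lt {t : β} (h : ∃ k, v k < t) :
    ∃ s < t, atomCDF v p s = ∑ k with v k < t, p k := by
  obtain ⟨j, hj, hmax⟩ := exists_max_image {k | v k < t} v (by simpa [Finset.Nonempty] using h)
  have hjt : v j < t := (mem_filter.mp hj).2
  refine ⟨v j, hjt, sum_congr (filter_congr fun k _ => ⟨fun hk => hk.trans_lt hjt, fun hk => ?_⟩)
    fun _ _ => rfl⟩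
  exact hmax k (by simpa using hk)

theorem sum_filter_lt_sInf_lt {c : ℝ} (hc : 0 < c) :
    ∑ k with v k < sInf {t | c ≤ atomCDF v p t}, p k < c := by
  by_cases h : ∃ k, v k < sInf {t | c ≤ atomCDF v p t}
  · obtain ⟨s, hs, hsum⟩ := exists_atomCDF_eq_sum_lt (p := p) h
    rw [← hsum]
    by_contra! hcs
    exact hs.not_ge (sInf_le hcs)
  · push Not at h
    simpa [fun k => (h k).not_gt] using hc

theorem atomCDF_eq_sum_lt_add_sum_eq (t : β) :
    atomCDF v p t = ∑ k with v k < t, p k + ∑ k with v k = t, p k := by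
  simp only [atomCDF, sum_filter, ← sum_add_distrib]
  refine sum_congr rfl fun k _ => ?_
  rcases lt_trichotomy (v k) t with h | h | h
  · simp [h, h.le, h.ne]
  · simp [h]
  · simp [h.not_ge, h.not_gt, h.ne']

theorem sum_filter_eq_le_sup' [Nonempty ι] (hv : Function.Injective v) (hp : ∀ k, 0 ≤ p k)
    (t : β) :
    ∑ k with v k = t, p k ≤ univ.sup' univ_nonempty p := by
  by_cases h : ∃ j, v j = t
  · obtain ⟨j, rfl⟩ := h
    rw [sum_eq_single_of_mem j (by simp) fun k hk hkj => (hkj (hv (mem_filter.mp hk).2)).elim]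
    exact le_sup' p (mem_univ j)
  · push Not at h
    rw [filter_false_of_mem fun k _ => h k, sum_empty]
    exact (hp (Classical.arbitrary ι)).trans (le_sup' p (mem_univ _))

end AtomCDF

open Classical in
/-- Coverage of the quantile of a finite discrete distribution on extended reals. -/
theorem stmt_0 (N : ℕ) (v : Fin (N + 1) → EReal) (p : Fin (N + 1) → ℝ)
    (hv : StrictMono v) (hp : ∀ k, 0 ≤ p k) (hsum : ∑ k, p k = 1)
    (F : EReal → ℝ) (hF : ∀ t, F t = ∑ k, if v k ≤ t then p k else 0)
    (α : ℝ) (hα : α ∈ Set.Ico (0 : ℝ) 1)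
    (q : EReal) (hq : q = sInf {t : EReal | 1 - α ≤ F t}) :
    1 - α ≤ F q ∧ F q < 1 - α + Finset.univ.sup' Finset.univ_nonempty p := by
  obtain ⟨hα0, hα1⟩ := hα
  obtain rfl : F = atomCDF v p := funext fun t => by rw [hF, atomCDF, sum_filter]
  subst hq
  refine ⟨le_atomCDF_sInf hp (by linarith), ?_⟩
  rw [atomCDF_eq_sum_lt_add_sum_eq]
  exact add_lt_add_of_lt_of_le (sum_filter_lt_sInf_lt (by linarith))
    (sum_filter_eq_le_sup' hv.injective hp _)
end

section
/- Let $\alpha \in (0,1)$, $\gamma > 0$, let $v_1 < \cdots < v_N$ be reals and $p_1,\ldots,p_N \in [0,1]$ with $\sum_k p_k = 1$. Assume $1-\alpha \notin \{\sum_{l=1}^k p_l\}_{k\in[N]}$. Let $v_{k_\star}$ denote the unique minimizer of $F = \sum_k p_k S_{\alpha,v_k}$ and $q^\gamma$ denote the unique minimizer of the regularized objective $F_\gamma = \sum_k p_k S_{\alpha,v_k}^\gamma$. Then $|q^\gamma - v_{k_\star}| \le \gamma$. -/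
/-- Pinball loss at level `α` and point `v`. -/
noncomputable def pinball (α v q : ℝ) : ℝ :=
  if v ≥ q then (1 - α) * (v - q) else α * (q - v)

/-- Moreau envelope of the pinball loss with regularization `γ`. -/
noncomputable def pinballMoreau (α v γ q : ℝ) : ℝ :=
  sInf {x : ℝ | ∃ q' : ℝ, x = pinball α v q' + (q' - q) ^ 2 / (2 * γ)}

lemma pinball_nonneg {α v q : ℝ} (h0 : 0 ≤ α) (h1 : α ≤ 1) : 0 ≤ pinball α v q := by
  unfold pinball
  split_ifs with h
  · exact mul_nonneg (by linarith) (by linarith)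
  · exact mul_nonneg h0 (by push_neg at h; linarith)

lemma moreau_bddBelow {α v γ : ℝ} (q : ℝ) (h0 : 0 ≤ α) (h1 : α ≤ 1) (hγ : 0 < γ) :
    BddBelow {x : ℝ | ∃ q' : ℝ, x = pinball α v q' + (q' - q) ^ 2 / (2 * γ)} := by
  refine ⟨0, fun x hx => ?_⟩
  obtain ⟨q', rfl⟩ := hx
  have := pinball_nonneg (α := α) (v := v) (q := q') h0 h1
  have h2 : (0:ℝ) ≤ (q' - q) ^ 2 / (2 * γ) := div_nonneg (sq_nonneg _) (by linarith)
  linarith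

lemma moreau_nonempty {α v γ : ℝ} (q : ℝ) :
    ({x : ℝ | ∃ q' : ℝ, x = pinball α v q' + (q' - q) ^ 2 / (2 * γ)}).Nonempty :=
  ⟨pinball α v q + (q - q) ^ 2 / (2 * γ), q, rfl⟩

lemma moreau_le {α v γ : ℝ} (q q' : ℝ) (h0 : 0 ≤ α) (h1 : α ≤ 1) (hγ : 0 < γ) :
    pinballMoreau α v γ q ≤ pinball α v q' + (q' - q) ^ 2 / (2 * γ) :=
  csInf_le (moreau_bddBelow q h0 h1 hγ) ⟨q', rfl⟩

lemma moreau_eq_right {α v γ q : ℝ} (hα : α ∈ Set.Ioo (0:ℝ) 1) (hγ : 0 < γ)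
    (hq : v + γ * α ≤ q) : pinballMoreau α v γ q = α * (q - v) - γ * α ^ 2 / 2 := by
  obtain ⟨h0, h1⟩ := hα
  have h2γ : (0:ℝ) < 2 * γ := by linarith
  apply le_antisymm
  · have hm := moreau_le (v := v) q (q - γ * α) h0.le h1.le hγ
    have : pinball α v (q - γ * α) + (q - γ * α - q) ^ 2 / (2 * γ)
        = α * (q - v) - γ * α ^ 2 / 2 := by
      unfold pinball
      split_ifs with h
      · have hv' : v = q - γ * α := by nlinarith
        rw [hv']; field_simp; ring
      · field_simp; ring
    linarith [hm, this.symm.le]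
  · apply le_csInf (moreau_nonempty q)
    rintro x ⟨q', rfl⟩
    have key : α * (q - v) - γ * α ^ 2 / 2 - pinball α v q' ≤ (q' - q) ^ 2 / (2 * γ) := by
      rw [le_div_iff₀ h2γ]
      unfold pinball
      split_ifs with h
      · nlinarith [sq_nonneg (q - q' - γ * α), mul_nonneg (by linarith : (0:ℝ) ≤ 1 - α) (by linarith : (0:ℝ) ≤ v - q'), hγ]
      · nlinarith [sq_nonneg (q' - q + γ * α)]
    linarith

lemma moreau_eq_left {α v γ q : ℝ} (hα : α ∈ Set.Ioo (0:ℝ) 1) (hγ : 0 < γ)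
    (hq : q ≤ v - γ * (1 - α)) :
    pinballMoreau α v γ q = (1 - α) * (v - q) - γ * (1 - α) ^ 2 / 2 := by
  obtain ⟨h0, h1⟩ := hα
  have h2γ : (0:ℝ) < 2 * γ := by linarith
  apply le_antisymm
  · have hm := moreau_le (v := v) q (q + γ * (1 - α)) h0.le h1.le hγ
    have : pinball α v (q + γ * (1 - α)) + (q + γ * (1 - α) - q) ^ 2 / (2 * γ)
        = (1 - α) * (v - q) - γ * (1 - α) ^ 2 / 2 := by
      unfold pinball
      split_ifs with h
      · field_simp; ring
      · exfalso; push_neg at h; nlinarith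
    linarith [hm, this.symm.le]
  · apply le_csInf (moreau_nonempty q)
    rintro x ⟨q', rfl⟩
    have key : (1 - α) * (v - q) - γ * (1 - α) ^ 2 / 2 - pinball α v q'
        ≤ (q' - q) ^ 2 / (2 * γ) := by
      rw [le_div_iff₀ h2γ]
      unfold pinball
      split_ifs with h
      · nlinarith [sq_nonneg (q' - q - γ * (1 - α))]
      · push_neg at h
        nlinarith [sq_nonneg (q' - q - γ * (1 - α)), mul_nonneg h0.le (by linarith : (0:ℝ) ≤ q' - v), hγ]
    linarith

lemma moreau_lip_left {α v γ a b : ℝ} (hα : α ∈ Set.Ioo (0:ℝ) 1) (hγ : 0 < γ)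
    (hab : a ≤ b) :
    pinballMoreau α v γ a ≤ pinballMoreau α v γ b + (1 - α) * (b - a) := by
  obtain ⟨h0, h1⟩ := hα
  have h2 : pinballMoreau α v γ a - (1 - α) * (b - a) ≤ pinballMoreau α v γ b := by
    apply le_csInf (moreau_nonempty b)
    rintro x ⟨q', rfl⟩
    have hm := moreau_le (v := v) a (q' - (b - a)) h0.le h1.le hγ
    have hsq : (q' - (b - a) - a) ^ 2 = (q' - b) ^ 2 := by ring
    have hpb : pinball α v (q' - (b - a)) ≤ pinball α v q' + (1 - α) * (b - a) := by
      unfold pinball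
      split_ifs with h h' h'
      · nlinarith
      · nlinarith [mul_nonneg (by linarith : (0:ℝ) ≤ 1 - α) (by push_neg at h'; linarith : (0:ℝ) ≤ q' - v), mul_nonneg h0.le (by push_neg at h'; linarith : (0:ℝ) ≤ q' - v)]
      · exfalso; push_neg at h; linarith
      · nlinarith
    rw [hsq] at hm
    linarith
  linarith

lemma moreau_lip_right {α v γ a b : ℝ} (hα : α ∈ Set.Ioo (0:ℝ) 1) (hγ : 0 < γ)
    (hab : a ≤ b) :
    pinballMoreau α v γ b ≤ pinballMoreau α v γ a + α * (b - a) := by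
  obtain ⟨h0, h1⟩ := hα
  have h2 : pinballMoreau α v γ b - α * (b - a) ≤ pinballMoreau α v γ a := by
    apply le_csInf (moreau_nonempty a)
    rintro x ⟨q', rfl⟩
    have hm := moreau_le (v := v) b (q' + (b - a)) h0.le h1.le hγ
    have hsq : (q' + (b - a) - b) ^ 2 = (q' - a) ^ 2 := by ring
    have hpb : pinball α v (q' + (b - a)) ≤ pinball α v q' + α * (b - a) := by
      unfold pinball
      split_ifs with h h' h'
      · nlinarith [mul_nonneg h0.le (by linarith : (0:ℝ) ≤ b - a), mul_nonneg (by linarith : (0:ℝ) ≤ 1 - α) (by linarith : (0:ℝ) ≤ b - a)]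
      · exfalso; push_neg at h'; linarith
      · push_neg at h
        nlinarith [mul_nonneg h0.le (by linarith : (0:ℝ) ≤ v - q' + (b-a)), mul_nonneg (by linarith : (0:ℝ) ≤ 1 - α) (by linarith : (0:ℝ) ≤ v - q')]
      · nlinarith
    rw [hsq] at hm
    linarith
  linarith

lemma pinball_of_le {α v q : ℝ} (h : v ≤ q) : pinball α v q = α * (q - v) := by
  unfold pinball
  split_ifs with hh
  · have hvq : v = q := le_antisymm h hh
    rw [hvq]; ring
  · rfl

lemma pinball_of_ge {α v q : ℝ} (h : q ≤ v) : pinball α v q = (1 - α) * (v - q) := by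
  unfold pinball
  rw [if_pos h]

/-- The minimizer of the Moreau-regularized weighted pinball loss is within `γ`
of the minimizer of the weighted pinball loss. -/
theorem stmt_5 (N : ℕ) (α γ : ℝ) (hα : α ∈ Set.Ioo (0 : ℝ) 1) (hγ : 0 < γ)
    (v : Fin N → ℝ) (hv : StrictMono v)
    (p : Fin N → ℝ) (hp : ∀ k, p k ∈ Set.Icc (0 : ℝ) 1) (hsum : ∑ k, p k = 1)
    (F Fγ : ℝ → ℝ)
    (hF : ∀ q, F q = ∑ k, p k * pinball α (v k) q)
    (hFγ : ∀ q, Fγ q = ∑ k, p k * pinballMoreau α (v k) γ q)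
    (hnot : ∀ k : Fin N, 1 - α ≠ ∑ l ∈ Finset.univ.filter (fun l => l ≤ k), p l)
    (kstar : Fin N) (hks : ∀ q : ℝ, F (v kstar) ≤ F q)
    (qγ : ℝ) (hqγ : ∀ q : ℝ, Fγ qγ ≤ Fγ q) :
    |qγ - v kstar| ≤ γ := by
  obtain ⟨ha0, ha1⟩ := hα
  have hα' : α ∈ Set.Ioo (0:ℝ) 1 := ⟨ha0, ha1⟩
  have hpnn : ∀ k, 0 ≤ p k := fun k => (hp k).1
  set C : ℝ := ∑ l ∈ Finset.univ.filter (fun l : Fin N => l ≤ kstar), p l with hCdef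
  set D : ℝ := ∑ l ∈ Finset.univ.filter (fun l : Fin N => ¬ l ≤ kstar), p l with hDdef
  have hCD : C + D = 1 := by
    rw [hCdef, hDdef, Finset.sum_filter_add_sum_filter_not]; exact hsum
  set C' : ℝ := ∑ l ∈ Finset.univ.filter (fun l : Fin N => l < kstar), p l with hC'def
  set D' : ℝ := ∑ l ∈ Finset.univ.filter (fun l : Fin N => ¬ l < kstar), p l with hD'def
  have hCD' : C' + D' = 1 := by
    rw [hC'def, hD'def, Finset.sum_filter_add_sum_filter_not]; exact hsum
  -- Step 1 : 1 - α < C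
  have hCgt : 1 - α < C := by
    set ε : ℝ := if h : kstar.val + 1 < N then v ⟨kstar.val + 1, h⟩ - v kstar else 1
      with hεdef
    have hε : 0 < ε := by
      rw [hεdef]; split_ifs with h
      · exact sub_pos.2 (hv (by simp [Fin.lt_def]))
      · norm_num
    have hεk : ∀ k : Fin N, kstar < k → v kstar + ε ≤ v k := by
      intro k hk
      have hk' : kstar.val + 1 ≤ k.val := hk
      have h : kstar.val + 1 < N := lt_of_le_of_lt hk' k.isLt
      rw [hεdef, dif_pos h]
      have : v (⟨kstar.val + 1, h⟩ : Fin N) ≤ v k := hv.monotone hk'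
      linarith
    have key : ∀ k : Fin N,
        pinball α (v k) (v kstar + ε) - pinball α (v k) (v kstar)
          = if k ≤ kstar then α * ε else -((1 - α) * ε) := by
      intro k
      by_cases hk : k ≤ kstar
      · rw [if_pos hk]
        have hvk : v k ≤ v kstar := hv.monotone hk
        rw [pinball_of_le (by linarith : v k ≤ v kstar + ε), pinball_of_le hvk]
        ring
      · rw [if_neg hk]
        have hk' : kstar < k := lt_of_not_ge hk
        have hvk : v kstar + ε ≤ v k := hεk k hk'
        rw [pinball_of_ge (by linarith : v kstar + ε ≤ v k),
          pinball_of_ge (by linarith : v kstar ≤ v k)]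
        ring
    have h1' := hks (v kstar + ε)
    rw [hF, hF] at h1'
    have h2 : (0:ℝ) ≤ ∑ k, p k *
        (pinball α (v k) (v kstar + ε) - pinball α (v k) (v kstar)) := by
      have he : ∑ k, p k * (pinball α (v k) (v kstar + ε) - pinball α (v k) (v kstar))
          = (∑ k, p k * pinball α (v k) (v kstar + ε))
            - ∑ k, p k * pinball α (v k) (v kstar) := by
        rw [← Finset.sum_sub_distrib]
        exact Finset.sum_congr rfl fun k _ => by ring
      rw [he]; linarith
    simp only [key, mul_ite] at h2
    rw [Finset.sum_ite, ← Finset.sum_mul, ← Finset.sum_mul] at h2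
    have hD' : D = 1 - C := by linarith
    rw [← hCdef, ← hDdef, hD'] at h2
    have hCge : 1 - α ≤ C := by nlinarith [h2, hε]
    exact lt_of_le_of_ne hCge (hnot kstar)
  -- Step 2 : C' < 1 - α
  have hC'lt : C' < 1 - α := by
    rcases Nat.eq_zero_or_pos kstar.val with h0' | h0'
    · have hempty : (Finset.univ.filter (fun l : Fin N => l < kstar)) = ∅ := by
        ext l
        simp only [Finset.mem_filter, Finset.mem_univ, true_and, Finset.notMem_empty,
          iff_false]
        intro hl
        have : l.val < kstar.val := hl
        omega
      have : C' = 0 := by rw [hC'def, hempty, Finset.sum_empty]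
      linarith
    · set ε : ℝ := if h : 0 < kstar.val then
          v kstar - v ⟨kstar.val - 1, lt_of_le_of_lt (Nat.pred_le _) kstar.isLt⟩ else 1
        with hεdef
      have hε : 0 < ε := by
        rw [hεdef, dif_pos h0']
        have : (⟨kstar.val - 1, lt_of_le_of_lt (Nat.pred_le _) kstar.isLt⟩ : Fin N) < kstar := by
          simp only [Fin.lt_def]; omega
        linarith [hv this]
      have hεk : ∀ k : Fin N, k < kstar → v k ≤ v kstar - ε := by
        intro k hk
        rw [hεdef, dif_pos h0']
        have hle : k ≤ (⟨kstar.val - 1, lt_of_le_of_lt (Nat.pred_le _) kstar.isLt⟩ : Fin N) := by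
          simp only [Fin.le_def]
          have : k.val < kstar.val := hk
          omega
        have := hv.monotone hle
        linarith
      have key : ∀ k : Fin N,
          pinball α (v k) (v kstar - ε) - pinball α (v k) (v kstar)
            = if k < kstar then -(α * ε) else (1 - α) * ε := by
        intro k
        by_cases hk : k < kstar
        · rw [if_pos hk]
          have hvk : v k ≤ v kstar - ε := hεk k hk
          rw [pinball_of_le hvk, pinball_of_le (by linarith : v k ≤ v kstar)]
          ring
        · rw [if_neg hk]
          have hvk : v kstar ≤ v k := hv.monotone (not_lt.1 hk)
          rw [pinball_of_ge (by linarith : v kstar - ε ≤ v k), pinball_of_ge hvk]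
          ring
      have h1' := hks (v kstar - ε)
      rw [hF, hF] at h1'
      have h2 : (0:ℝ) ≤ ∑ k, p k *
          (pinball α (v k) (v kstar - ε) - pinball α (v k) (v kstar)) := by
        have he : ∑ k, p k * (pinball α (v k) (v kstar - ε) - pinball α (v k) (v kstar))
            = (∑ k, p k * pinball α (v k) (v kstar - ε))
              - ∑ k, p k * pinball α (v k) (v kstar) := by
          rw [← Finset.sum_sub_distrib]
          exact Finset.sum_congr rfl fun k _ => by ring
        rw [he]; linarith
      simp only [key, mul_ite] at h2
      rw [Finset.sum_ite, ← Finset.sum_mul, ← Finset.sum_mul] at h2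
      rw [← hC'def, ← hD'def] at h2
      have hD'' : D' = 1 - C' := by linarith
      rw [hD''] at h2
      have hC'le : C' ≤ 1 - α := by nlinarith [h2, hε]
      -- strictness via hnot at predecessor
      set kpred : Fin N := ⟨kstar.val - 1, lt_of_le_of_lt (Nat.pred_le _) kstar.isLt⟩
        with hkpdef
      have hfil : (Finset.univ.filter (fun l : Fin N => l < kstar))
          = Finset.univ.filter (fun l : Fin N => l ≤ kpred) := by
        apply Finset.filter_congr
        intro l _
        simp only [Fin.lt_def, Fin.le_def, hkpdef]
        omega
      have hCeq : C' = ∑ l ∈ Finset.univ.filter (fun l : Fin N => l ≤ kpred), p l := by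
        rw [hC'def, hfil]
      refine lt_of_le_of_ne hC'le fun he => hnot kpred ?_
      rw [← hCeq, he]
  -- Step 3 : the two contradictions
  rw [abs_le]
  constructor
  · by_contra h
    push_neg at h
    have hab : qγ < v kstar - γ := by linarith
    have hcmp := hqγ (v kstar - γ)
    rw [hFγ, hFγ] at hcmp
    have hterm : ∀ k : Fin N, pinballMoreau α (v k) γ (v kstar - γ)
        ≤ pinballMoreau α (v k) γ qγ
          + (if k < kstar then α * ((v kstar - γ) - qγ)
             else -((1 - α) * ((v kstar - γ) - qγ))) := by
      intro k
      by_cases hk : k < kstar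
      · rw [if_pos hk]
        exact moreau_lip_right hα' hγ hab.le
      · rw [if_neg hk]
        have hvk : v kstar ≤ v k := hv.monotone (not_lt.1 hk)
        have hb : v kstar - γ ≤ v k - γ * (1 - α) := by nlinarith
        have ha : qγ ≤ v k - γ * (1 - α) := by linarith
        rw [moreau_eq_left hα' hγ hb, moreau_eq_left hα' hγ ha]
        linarith
    have hle1 : ∀ k ∈ Finset.univ, p k * pinballMoreau α (v k) γ (v kstar - γ)
        ≤ p k * (pinballMoreau α (v k) γ qγ
          + (if k < kstar then α * ((v kstar - γ) - qγ)
             else -((1 - α) * ((v kstar - γ) - qγ)))) :=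
      fun k _ => mul_le_mul_of_nonneg_left (hterm k) (hpnn k)
    have hle2 := Finset.sum_le_sum hle1
    have he : ∑ k, p k * (pinballMoreau α (v k) γ qγ
          + (if k < kstar then α * ((v kstar - γ) - qγ)
             else -((1 - α) * ((v kstar - γ) - qγ))))
        = (∑ k, p k * pinballMoreau α (v k) γ qγ)
          + ∑ k, p k * (if k < kstar then α * ((v kstar - γ) - qγ)
             else -((1 - α) * ((v kstar - γ) - qγ))) := by
      rw [← Finset.sum_add_distrib]
      exact Finset.sum_congr rfl fun k _ => by ring
    rw [he] at hle2
    have hX : ∑ k, p k * (if k < kstar then α * ((v kstar - γ) - qγ)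
             else -((1 - α) * ((v kstar - γ) - qγ)))
        = C' * (α * ((v kstar - γ) - qγ)) + D' * (-((1 - α) * ((v kstar - γ) - qγ))) := by
      simp only [mul_ite]
      rw [Finset.sum_ite, ← Finset.sum_mul, ← Finset.sum_mul]
    rw [hX] at hle2
    have hD'' : D' = 1 - C' := by linarith
    rw [hD''] at hle2
    nlinarith [hle2, hcmp, mul_pos (show (0:ℝ) < (v kstar - γ) - qγ by linarith)
      (show (0:ℝ) < (1 - α) - C' by linarith)]
  · by_contra h
    push_neg at h
    have hab : v kstar + γ < qγ := by linarith
    have hcmp := hqγ (v kstar + γ)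
    rw [hFγ, hFγ] at hcmp
    have hterm : ∀ k : Fin N, pinballMoreau α (v k) γ qγ
        ≥ pinballMoreau α (v k) γ (v kstar + γ)
          + (if k ≤ kstar then α * (qγ - (v kstar + γ))
             else -((1 - α) * (qγ - (v kstar + γ)))) := by
      intro k
      by_cases hk : k ≤ kstar
      · rw [if_pos hk]
        have hvk : v k ≤ v kstar := hv.monotone hk
        have ha : v k + γ * α ≤ v kstar + γ := by nlinarith
        have hb : v k + γ * α ≤ qγ := by linarith
        rw [moreau_eq_right hα' hγ ha, moreau_eq_right hα' hγ hb]
        linarith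
      · rw [if_neg hk]
        have := moreau_lip_left (v := v k) hα' hγ hab.le
        linarith
    have hle1 : ∀ k ∈ Finset.univ, p k * (pinballMoreau α (v k) γ (v kstar + γ)
          + (if k ≤ kstar then α * (qγ - (v kstar + γ))
             else -((1 - α) * (qγ - (v kstar + γ)))))
        ≤ p k * pinballMoreau α (v k) γ qγ :=
      fun k _ => mul_le_mul_of_nonneg_left (hterm k) (hpnn k)
    have hle2 := Finset.sum_le_sum hle1
    have he : ∑ k, p k * (pinballMoreau α (v k) γ (v kstar + γ)
          + (if k ≤ kstar then α * (qγ - (v kstar + γ))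
             else -((1 - α) * (qγ - (v kstar + γ)))))
        = (∑ k, p k * pinballMoreau α (v k) γ (v kstar + γ))
          + ∑ k, p k * (if k ≤ kstar then α * (qγ - (v kstar + γ))
             else -((1 - α) * (qγ - (v kstar + γ)))) := by
      rw [← Finset.sum_add_distrib]
      exact Finset.sum_congr rfl fun k _ => by ring
    rw [he] at hle2
    have hX : ∑ k, p k * (if k ≤ kstar then α * (qγ - (v kstar + γ))
             else -((1 - α) * (qγ - (v kstar + γ))))
        = C * (α * (qγ - (v kstar + γ))) + D * (-((1 - α) * (qγ - (v kstar + γ)))) := by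
      simp only [mul_ite]
      rw [Finset.sum_ite, ← Finset.sum_mul, ← Finset.sum_mul]
    rw [hX] at hle2
    have hD'' : D = 1 - C := by linarith
    rw [hD''] at hle2
    nlinarith [hle2, hcmp, mul_pos (show (0:ℝ) < qγ - (v kstar + γ) by linarith)
      (show (0:ℝ) < C - (1 - α) by linarith)]
end

section
/- Let $\hat f^\star, \hat r \in \mathbb{R}_{\ge 0}^{|\mathcal{Y}|}$ with $\hat f^\star$ in the probability simplex, and let $\epsilon \in (0, 1/2]$. Writing $\odot$ for componentwise product and $\langle \cdot,\cdot\rangle$ for the inner product, assume $1 + \langle \hat f^\star, \hat r - \mathbf{1}\rangle > 0$. Then $\Big\| \frac{\hat f^\star \langle \hat f^\star, \hat r - \mathbf{1}\rangle - \hat f^\star \odot (\hat r - \mathbf{1})}{1 + \langle \hat f^\star, \hat r - \mathbf{1}\rangle} \Big\|_1 \le 2 \cdot \mathbf{1}\{\|\hat r - \mathbf{1}\|_\infty > \epsilon\} + \frac{2\epsilon}{1-\epsilon}$. -/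
/-!
The `y`-th entry of the vector is `f y * (⟨f, r⟩ - r y) / ⟨f, r⟩`, so its `ℓ₁` norm is the mean
absolute deviation of `r` under `f`, divided by the mean `⟨f, r⟩ = 1 + ⟨f, r - 1⟩`. Since `r ≥ 0`,
the deviation is at most twice the mean, so the norm is always at most `2`. If moreover
`|r - 1| ≤ ε` everywhere, the deviation is at most `2ε` and the mean is at least `1 - ε`.
-/

namespace Finset

variable {ι : Type*} {s : Finset ι} {f : ι → ℝ}

theorem one_add_sum_mul_sub_one (hf1 : ∑ i ∈ s, f i = 1) (r : ι → ℝ) :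
    1 + ∑ i ∈ s, f i * (r i - 1) = ∑ i ∈ s, f i * r i := by
  simp only [mul_sub, mul_one, sum_sub_distrib, hf1]
  ring

theorem sum_abs_mul_sub_div (hf : ∀ i ∈ s, 0 ≤ f i) {D : ℝ} (hD : 0 < D) (m : ℝ) (g : ι → ℝ) :
    ∑ i ∈ s, |(f i * m - f i * g i) / D| = (∑ i ∈ s, f i * |m - g i|) / D := by
  rw [sum_div]
  refine sum_congr rfl fun i hi => ?_
  rw [abs_div, abs_of_pos hD, ← mul_sub, abs_mul, abs_of_nonneg (hf i hi)]

theorem abs_sum_mul_le_of_abs_le (hf : ∀ i ∈ s, 0 ≤ f i) (hf1 : ∑ i ∈ s, f i = 1)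
    {g : ι → ℝ} {ε : ℝ} (hg : ∀ i ∈ s, |g i| ≤ ε) : |∑ i ∈ s, f i * g i| ≤ ε :=
  calc |∑ i ∈ s, f i * g i| ≤ ∑ i ∈ s, f i * |g i| := by
        refine (abs_sum_le_sum_abs _ s).trans_eq (sum_congr rfl fun i hi => ?_)
        rw [abs_mul, abs_of_nonneg (hf i hi)]
    _ ≤ ∑ i ∈ s, f i * ε := sum_le_sum fun i hi => mul_le_mul_of_nonneg_left (hg i hi) (hf i hi)
    _ = ε := by rw [← sum_mul, hf1, one_mul]

theorem sum_mul_abs_sub_le_add_sum_mul (hf : ∀ i ∈ s, 0 ≤ f i) (hf1 : ∑ i ∈ s, f i = 1)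
    {X : ι → ℝ} (hX : ∀ i ∈ s, 0 ≤ X i) {m : ℝ} (hm : 0 ≤ m) :
    ∑ i ∈ s, f i * |m - X i| ≤ m + ∑ i ∈ s, f i * X i :=
  calc ∑ i ∈ s, f i * |m - X i| ≤ ∑ i ∈ s, (f i * m + f i * X i) := by
        refine sum_le_sum fun i hi => ?_
        rw [← mul_add]
        refine mul_le_mul_of_nonneg_left ?_ (hf i hi)
        rw [abs_le]
        constructor <;> linarith [hX i hi]
    _ = m + ∑ i ∈ s, f i * X i := by rw [sum_add_distrib, ← sum_mul, hf1, one_mul]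

theorem sum_mul_abs_sum_mul_sub_le_of_abs_le (hf : ∀ i ∈ s, 0 ≤ f i) (hf1 : ∑ i ∈ s, f i = 1)
    {X : ι → ℝ} {ε : ℝ} (hX : ∀ i ∈ s, |X i| ≤ ε) :
    ∑ i ∈ s, f i * |∑ j ∈ s, f j * X j - X i| ≤ 2 * ε :=
  have hmean := abs_sum_mul_le_of_abs_le hf hf1 hX
  calc ∑ i ∈ s, f i * |∑ j ∈ s, f j * X j - X i| ≤ ∑ i ∈ s, f i * (2 * ε) := by
        refine sum_le_sum fun i hi => mul_le_mul_of_nonneg_left ?_ (hf i hi)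
        linarith [abs_sub (∑ j ∈ s, f j * X j) (X i), hX i hi]
    _ = 2 * ε := by rw [← sum_mul, hf1, one_mul]

end Finset

open Finset

open Classical in
/-- Bound on the `ℓ₁` norm of the self-normalization error of reweighted
empirical frequencies. -/
theorem stmt_9 (𝒴 : Type*) [Fintype 𝒴]
    (f r : 𝒴 → ℝ) (hf : ∀ y, 0 ≤ f y) (hf1 : ∑ y, f y = 1)
    (hr : ∀ y, 0 ≤ r y)
    (ε : ℝ) (hε : ε ∈ Set.Ioc (0 : ℝ) (1 / 2))
    (hden : 0 < 1 + ∑ y, f y * (r y - 1)) :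
    ∑ y, |(f y * (∑ z, f z * (r z - 1)) - f y * (r y - 1))
          / (1 + ∑ z, f z * (r z - 1))|
      ≤ 2 * (if ∃ y, ε < |r y - 1| then (1 : ℝ) else 0) + 2 * ε / (1 - ε) := by
  obtain ⟨hε0, hε2⟩ := hε
  have hf' : ∀ y ∈ univ, 0 ≤ f y := fun y _ => hf y
  set S := ∑ z, f z * (r z - 1)
  rw [sum_abs_mul_sub_div hf' hden]
  have hε_bound : 0 ≤ 2 * ε / (1 - ε) := div_nonneg (by linarith) (by linarith)
  split_ifs with hfar
  · have hdev := sum_mul_abs_sub_le_add_sum_mul hf' hf1 (fun y _ => hr y) hden.le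
    rw [← one_add_sum_mul_sub_one hf1 r] at hdev
    have hshift : ∀ y, S - (r y - 1) = 1 + S - r y := fun y => by ring
    simp only [hshift]
    have hratio : (∑ y, f y * |1 + S - r y|) / (1 + S) ≤ 2 := (div_le_iff₀ hden).2 (by linarith)
    linarith
  · push Not at hfar
    have hS : |S| ≤ ε := abs_sum_mul_le_of_abs_le hf' hf1 fun y _ => hfar y
    calc (∑ y, f y * |S - (r y - 1)|) / (1 + S) ≤ 2 * ε / (1 + S) :=
          div_le_div_of_nonneg_right
            (sum_mul_abs_sum_mul_sub_le_of_abs_le hf' hf1 fun y _ => hfar y) hden.le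
      _ ≤ 2 * ε / (1 - ε) :=
          div_le_div_of_nonneg_left (by linarith) (by linarith) (by linarith [(abs_le.1 hS).1])
      _ = 2 * 0 + 2 * ε / (1 - ε) := by ring
end

section
/- Let $Y_1, \ldots, Y_{N+1}$ be random labels in a finite set and $w \colon \mathcal{Y} \to [0, \infty)$ a bounded weight function with $\mathbb{E}[w(Y_1)] > 0$, where $Y_1, \ldots, Y_N$ are i.i.d. (and $Y_{N+1}$ may have a different distribution), all independent. Define the normalized weights $p_k = w(Y_k) / \sum_{l=1}^{N+1} w(Y_l)$ (with $p_k = 0$ when the denominator is zero). Then $\mathbb{E}\big[\max_{k=1}^{N+1} p_k\big] \le \frac{2\|w\|_\infty}{N\, \mathbb{E}[w(Y_1)]} + \frac{4}{N (\mathbb{E} w(Y_1))^2}\Big(\mathrm{Var}(w(Y_1)) + \frac{\mathrm{Var}(w(Y_{N+1}))}{N}\Big)$. -/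
/-!
Let `S = ∑ₗ w(Yₗ)`, with mean `m = N 𝔼w(Y₁) + 𝔼w(Y_{N+1}) ≥ N 𝔼w(Y₁)`. Where `S > m/2` every
normalized weight is at most `‖w‖∞ / (m/2)`; the event `S ≤ m/2`, on which we only use `pₖ ≤ 1`,
has probability at most `Var S / (m/2)²` by Chebyshev's inequality, and by independence
`Var S = N Var w(Y₁) + Var w(Y_{N+1})`.
-/

open MeasureTheory ProbabilityTheory Finset

noncomputable def normalizeWeights {ι : Type*} [Fintype ι] (x : ι → ℝ) (k : ι) : ℝ :=
  if ∑ l, x l = 0 then 0 else x k / ∑ l, x l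

section normalizeWeights

variable {ι : Type*} [Fintype ι] {x : ι → ℝ}

lemma normalizeWeights_nonneg (hx : ∀ l, 0 ≤ x l) (k : ι) : 0 ≤ normalizeWeights x k := by
  unfold normalizeWeights
  split_ifs
  · rfl
  · exact div_nonneg (hx k) (sum_nonneg fun l _ => hx l)

lemma normalizeWeights_le_one (hx : ∀ l, 0 ≤ x l) (k : ι) : normalizeWeights x k ≤ 1 := by
  unfold normalizeWeights
  split_ifs
  · exact zero_le_one
  · exact div_le_one_of_le₀ (single_le_sum (fun l _ => hx l) (mem_univ k))
      (sum_nonneg fun l _ => hx l)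

lemma normalizeWeights_le_div {B c : ℝ} (hx : ∀ l, 0 ≤ x l) (hB : ∀ l, x l ≤ B) (hc : 0 < c)
    (hcx : c ≤ ∑ l, x l) (k : ι) : normalizeWeights x k ≤ B / c := by
  rw [normalizeWeights, if_neg (hc.trans_le hcx).ne']
  exact div_le_div₀ ((hx k).trans (hB k)) (hB k) hc hcx

end normalizeWeights

lemma Fin.sum_univ_eq_mul_add_last {R : Type*} [NonAssocSemiring R] {N : ℕ}
    {f : Fin (N + 1) → R} {a : R} (h : ∀ k : Fin (N + 1), (k : ℕ) < N → f k = a) :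
    ∑ k, f k = N * a + f (Fin.last N) := by
  rw [Fin.sum_univ_castSucc, sum_congr rfl fun k _ => h k.castSucc k.isLt, sum_const,
    nsmul_eq_mul]

section Probability

variable {Ω : Type*} [MeasurableSpace Ω] {μ : Measure Ω}

lemma integral_le_measureReal_add_of_le_one [IsProbabilityMeasure μ] {f : Ω → ℝ} {A : Set Ω}
    {b : ℝ} (hA : MeasurableSet A) (hb : 0 ≤ b) (hf0 : ∀ ω, 0 ≤ f ω) (hf1 : ∀ ω, f ω ≤ 1)
    (hfA : ∀ ω ∉ A, f ω ≤ b) : ∫ ω, f ω ∂μ ≤ μ.real A + b := by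
  have hfg : ∀ ω, f ω ≤ A.indicator 1 ω + b := by
    intro ω
    by_cases hω : ω ∈ A
    · simp only [Set.indicator_of_mem hω, Pi.one_apply]
      linarith [hf1 ω]
    · simpa [Set.indicator_of_notMem hω] using hfA ω hω
  have hint : Integrable (A.indicator 1) μ := (integrable_const (1 : ℝ)).indicator hA
  calc ∫ ω, f ω ∂μ ≤ ∫ ω, (A.indicator 1 ω + b) ∂μ :=
        integral_mono_of_nonneg (ae_of_all _ hf0) (hint.add (integrable_const b)) (ae_of_all _ hfg)
    _ = μ.real A + b := by
        rw [integral_add hint (integrable_const b), integral_indicator_one hA]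
        simp

lemma measureReal_le_integral_sub_le_variance_div_sq [IsFiniteMeasure μ] {X : Ω → ℝ}
    (hX : MemLp X 2 μ) {c : ℝ} (hc : 0 < c) :
    μ.real {ω | X ω ≤ μ[X] - c} ≤ variance X μ / c ^ 2 := by
  refine ENNReal.toReal_le_of_le_ofReal (div_nonneg (variance_nonneg X μ) (sq_nonneg c))
    ((measure_mono fun ω hω => ?_).trans (meas_ge_le_variance_div_sq hX hc))
  simp only [Set.mem_ofPred_eq] at hω ⊢
  rw [abs_sub_comm]
  exact le_abs.mpr (Or.inl (by linarith))

theorem integral_sup_normalizeWeights_le [IsProbabilityMeasure μ] {ι : Type*} [Fintype ι]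
    [Nonempty ι] {X : ι → Ω → ℝ} {B : ℝ} (hXm : ∀ k, Measurable (X k))
    (hX0 : ∀ k ω, 0 ≤ X k ω) (hXB : ∀ k ω, X k ω ≤ B) (hm : 0 < μ[∑ k, X k]) :
    ∫ ω, univ.sup' univ_nonempty (normalizeWeights fun l => X l ω) ∂μ
      ≤ variance (∑ k, X k) μ / (μ[∑ k, X k] / 2) ^ 2 + B / (μ[∑ k, X k] / 2) := by
  set S := ∑ k, X k
  set m := μ[S]
  have hS : ∀ ω, S ω = ∑ l, X l ω := fun ω => sum_apply ω univ X
  have hSL2 : MemLp S 2 μ := memLp_finsetSum' _ fun k _ =>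
    MemLp.of_bound (hXm k).aestronglyMeasurable B
      (ae_of_all _ fun ω => by simpa [abs_of_nonneg (hX0 k ω)] using hXB k ω)
  have hB : 0 ≤ B := by
    obtain ⟨ω⟩ := nonempty_of_isProbabilityMeasure μ
    obtain ⟨k⟩ := ‹Nonempty ι›
    exact (hX0 k ω).trans (hXB k ω)
  have hA : MeasurableSet {ω | S ω ≤ m - m / 2} := by
    simp_rw [hS]
    exact (Finset.measurable_sum univ fun k _ => hXm k) measurableSet_Iic
  refine (integral_le_measureReal_add_of_le_one hA (div_nonneg hB (by positivity))
    (fun ω => ?_) (fun ω => ?_) (fun ω hω => ?_)).trans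
    (add_le_add_left (measureReal_le_integral_sub_le_variance_div_sq hSL2 (by positivity)) _)
  · exact (normalizeWeights_nonneg (hX0 · ω) _).trans
      (le_sup' _ (mem_univ (Classical.arbitrary ι)))
  · exact sup'_le _ _ fun k _ => normalizeWeights_le_one (hX0 · ω) k
  · have hSω : m / 2 ≤ ∑ l, X l ω := by
      rw [← hS]
      simp only [Set.mem_ofPred_eq, not_le] at hω
      linarith
    exact sup'_le _ _ fun k _ =>
      normalizeWeights_le_div (hX0 · ω) (hXB · ω) (by positivity) hSω k

section IdentDistrib

variable {N : ℕ} {X : Fin (N + 1) → Ω → ℝ}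

lemma integral_sum_fin_succ_of_identDistrib (hX : ∀ k, Integrable (X k) μ)
    (hident : ∀ k : Fin (N + 1), (k : ℕ) < N → IdentDistrib (X k) (X 0) μ μ) :
    μ[∑ k, X k] = (N : ℝ) * μ[X 0] + μ[X (Fin.last N)] := by
  simp_rw [Finset.sum_apply]
  rw [integral_finsetSum _ fun k _ => hX k]
  exact Fin.sum_univ_eq_mul_add_last fun k hk => (hident k hk).integral_eq

lemma variance_sum_fin_succ_of_identDistrib (hX : ∀ k, MemLp (X k) 2 μ)
    (hident : ∀ k : Fin (N + 1), (k : ℕ) < N → IdentDistrib (X k) (X 0) μ μ)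
    (hind : iIndepFun X μ) :
    variance (∑ k, X k) μ = (N : ℝ) * variance (X 0) μ + variance (X (Fin.last N)) μ := by
  rw [IndepFun.variance_sum (fun k _ => hX k) fun i _ j _ hij => hind.indepFun hij]
  exact Fin.sum_univ_eq_mul_add_last fun k hk => (hident k hk).variance_eq

end IdentDistrib

end Probability

/-- Expected maximum of normalized importance weights. -/
theorem stmt_10 (Ω : Type*) [MeasurableSpace Ω] (μ : Measure Ω) [IsProbabilityMeasure μ]
    (𝒴 : Type*) [Fintype 𝒴] [Nonempty 𝒴] [MeasurableSpace 𝒴] [MeasurableSingletonClass 𝒴]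
    (N : ℕ) (hN : 0 < N)
    (Y : Fin (N + 1) → Ω → 𝒴) (hmeas : ∀ k, Measurable (Y k))
    (hid : ∀ k : Fin (N + 1), (k : ℕ) < N → Measure.map (Y k) μ = Measure.map (Y 0) μ)
    (hind : iIndepFun Y μ)
    (w : 𝒴 → ℝ) (hw : ∀ y, 0 ≤ w y)
    (p : Fin (N + 1) → Ω → ℝ)
    (hp : ∀ k ω, p k ω = if (∑ l, w (Y l ω)) = 0 then 0
      else w (Y k ω) / ∑ l, w (Y l ω))
    (E0 EN Vr0 VrN wsup : ℝ)
    (hE0 : E0 = ∫ ω, w (Y 0 ω) ∂μ) (hE0pos : 0 < E0)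
    (hVr0 : Vr0 = ∫ ω, (w (Y 0 ω) - E0) ^ 2 ∂μ)
    (hEN : EN = ∫ ω, w (Y (Fin.last N) ω) ∂μ)
    (hVrN : VrN = ∫ ω, (w (Y (Fin.last N) ω) - EN) ^ 2 ∂μ)
    (hwsup : wsup = Finset.univ.sup' Finset.univ_nonempty w) :
    ∫ ω, Finset.univ.sup' Finset.univ_nonempty (fun k => p k ω) ∂μ
      ≤ 2 * wsup / (N * E0) + 4 / (N * E0 ^ 2) * (Vr0 + VrN / N) := by
  set X : Fin (N + 1) → Ω → ℝ := fun k => w ∘ Y k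
  have hwm : Measurable w := measurable_of_countable w
  have hwsup_ge : ∀ y, w y ≤ wsup := fun y => hwsup ▸ le_sup' w (mem_univ y)
  have hXL2 : ∀ k, MemLp (X k) 2 μ := fun k =>
    MemLp.of_bound (hwm.comp (hmeas k)).aestronglyMeasurable wsup
      (ae_of_all _ fun ω => by simpa [X, abs_of_nonneg (hw _)] using hwsup_ge _)
  have hident : ∀ k : Fin (N + 1), (k : ℕ) < N → IdentDistrib (X k) (X 0) μ μ := fun k hk =>
    (⟨(hmeas k).aemeasurable, (hmeas 0).aemeasurable, hid k hk⟩ : IdentDistrib _ _ μ μ).comp hwm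
  have hNE0 : 0 < (N : ℝ) * E0 := mul_pos (Nat.cast_pos.mpr hN) hE0pos
  have hEN0 : 0 ≤ EN := hEN ▸ integral_nonneg fun ω => hw _
  have hmean : μ[∑ k, X k] = N * E0 + EN := by
    rw [integral_sum_fin_succ_of_identDistrib (fun k => (hXL2 k).integrable one_le_two) hident,
      hE0, hEN]
    rfl
  have hvar : variance (∑ k, X k) μ = N * Vr0 + VrN := by
    rw [variance_sum_fin_succ_of_identDistrib hXL2 hident (hind.comp _ fun _ => hwm),
      variance_eq_integral (hXL2 0).aemeasurable, variance_eq_integral (hXL2 _).aemeasurable,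
      hVr0, hVrN, hE0, hEN]
    rfl
  have hp' : p = fun k ω => normalizeWeights (fun l => X l ω) k := funext₂ hp
  subst hp'
  calc _ ≤ variance (∑ k, X k) μ / (μ[∑ k, X k] / 2) ^ 2 + wsup / (μ[∑ k, X k] / 2) :=
        integral_sup_normalizeWeights_le (fun k => hwm.comp (hmeas k)) (fun k ω => hw (Y k ω))
          (fun k ω => hwsup_ge (Y k ω)) (by rw [hmean]; linarith)
    _ ≤ (N * Vr0 + VrN) / (N * E0 / 2) ^ 2 + wsup / (N * E0 / 2) := by
        have hV0 : 0 ≤ (N : ℝ) * Vr0 + VrN := hvar ▸ variance_nonneg _ _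
        have hwsup0 : 0 ≤ wsup := (hw (Classical.arbitrary 𝒴)).trans (hwsup_ge _)
        rw [hmean, hvar]
        gcongr <;> linarith
    _ = _ := by
        field_simp
        ring
end

section
/- Let $\{w(Y_k^i)\}$ be nonnegative random weights indexed by $\mathcal{I} = \{(i,k) : i \in [n], k \in [N^i]\} \cup \{(\star, N^\star+1)\}$, where the labels $Y_k^i$ for $k \le N^i$ are independent with $Y_k^i \sim P_Y^i$, $Y_{N^\star+1}^\star \sim P_Y^\star$, and $P_Y^{cal} = \sum_{i=1}^n (N^i/N) P_Y^i$ with $N = \sum_i N^i$. Write $\mathbb{E} w(Y^{cal}) = \sum_y P_Y^{cal}(y) w(y)$ and assume $\min_y w(y) > 0$. Then $\mathbb{P}\Big( \min_{(i,k)\in\mathcal{I}} \frac{w(Y_k^i)}{\sum_{(j,l)\in\mathcal{I}} w(Y_l^j)} < \frac{\min_y w(y)}{2N\, \mathbb{E} w(Y^{cal})} \Big) \le \frac{4\,\mathrm{Var}(w(Y^{cal}))}{N\,(\mathbb{E} w(Y^{cal}))^2} + \frac{2\, \mathbb{E} w(Y_{N^\star+1}^\star)}{N\, \mathbb{E} w(Y^{cal})}$.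 -/
/-!
If the smallest normalized weight is below `w_min / (2 N E)`, then, since every weight is at
least `w_min`, the total weight exceeds `2 N E`. The calibration part of the total has mean
`N E` and, by independence, variance at most `N Var`; so either it deviates from its mean by
`N E / 2` (Chebyshev) or the test weight is at least `N E / 2` (Markov).
-/

open MeasureTheory ProbabilityTheory

section FiniteRange

variable {Ω 𝒴 : Type*} [MeasurableSpace Ω] {μ : Measure Ω}
  [Fintype 𝒴] [MeasurableSpace 𝒴] [MeasurableSingletonClass 𝒴] {Z : Ω → 𝒴}

lemma integral_comp_eq_sum_measureReal [IsFiniteMeasure μ] (hZ : Measurable Z) (f : 𝒴 → ℝ) :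
    ∫ ω, f (Z ω) ∂μ = ∑ y, μ.real {ω | Z ω = y} * f y := by
  rw [← integral_map hZ.aemeasurable (measurable_of_countable f).aestronglyMeasurable,
    integral_fintype Integrable.of_finite]
  refine Finset.sum_congr rfl fun y _ => ?_
  rw [map_measureReal_apply hZ (measurableSet_singleton y), smul_eq_mul]
  rfl

lemma memLp_comp_of_fintype [IsFiniteMeasure μ] (hZ : Measurable Z) (f : 𝒴 → ℝ)
    (p : ENNReal) : MemLp (fun ω => f (Z ω)) p μ :=
  MemLp.of_discrete.comp_of_map hZ.aemeasurable

lemma variance_comp_le_sum [IsProbabilityMeasure μ] (hZ : Measurable Z) (f : 𝒴 → ℝ) (c : ℝ) :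
    variance (fun ω => f (Z ω)) μ ≤ ∑ y, μ.real {ω | Z ω = y} * (f y - c) ^ 2 := by
  have hm : AEStronglyMeasurable (fun ω => f (Z ω)) μ := (memLp_comp_of_fintype hZ f 1).1
  rw [← variance_sub_const hm c, ← integral_comp_eq_sum_measureReal hZ]
  exact variance_le_expectation_sq (hm.sub aestronglyMeasurable_const)

lemma variance_sum_comp_le_sum [IsProbabilityMeasure μ] {ι : Type*} [Fintype ι]
    {Z : ι → Ω → 𝒴} (hZ : ∀ i, Measurable (Z i)) (hind : iIndepFun Z μ) (f : 𝒴 → ℝ) (c : ℝ) :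
    variance (fun ω => ∑ i, f (Z i ω)) μ
      ≤ ∑ i, ∑ y, μ.real {ω | Z i ω = y} * (f y - c) ^ 2 := by
  have hindf : iIndepFun (fun i ω => f (Z i ω)) μ :=
    hind.comp (fun _ => f) (fun _ => measurable_of_countable f)
  calc variance (fun ω => ∑ i, f (Z i ω)) μ
      = ∑ i, variance (fun ω => f (Z i ω)) μ := by
        rw [← IndepFun.variance_sum (fun i _ => memLp_comp_of_fintype (hZ i) f 2)
          (fun i _ j _ hij => hindf.indepFun hij)]
        congr 1
        ext ω
        simp
    _ ≤ _ := Finset.sum_le_sum fun i _ => variance_comp_le_sum (hZ i) f c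

end FiniteRange

lemma sum_sigma_mul_eq_mul_sum_mixture {ι 𝒴 : Type*} [Fintype ι] [Fintype 𝒴] (N : ι → ℕ)
    {t : ℝ} (ht : t ≠ 0) (P : ι → 𝒴 → ℝ) (g : 𝒴 → ℝ) :
    ∑ p : Σ i, Fin (N i), ∑ y, P p.1 y * g y = t * ∑ y, (∑ i, ((N i : ℝ) / t) * P i y) * g y := by
  simp only [Fintype.sum_sigma, Finset.sum_const, Finset.card_univ, Fintype.card_fin,
    nsmul_eq_mul, Finset.sum_mul, Finset.mul_sum]
  rw [Finset.sum_comm]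
  refine Finset.sum_congr rfl fun i _ => Finset.sum_congr rfl fun y _ => ?_
  field_simp

section Mixture

variable {Ω 𝒴 ι : Type*} [MeasurableSpace Ω] {μ : Measure Ω} [IsProbabilityMeasure μ]
  [Fintype 𝒴] [MeasurableSpace 𝒴] [MeasurableSingletonClass 𝒴] [Fintype ι] {N : ι → ℕ}
  {Z : (Σ i, Fin (N i)) → Ω → 𝒴} {P : ι → 𝒴 → ℝ} {t : ℝ}

lemma integral_sum_sigma_eq_mul_sum_mixture (hZ : ∀ p, Measurable (Z p))
    (hlaw : ∀ p y, μ.real {ω | Z p ω = y} = P p.1 y) (ht : t ≠ 0) (f : 𝒴 → ℝ) :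
    μ[fun ω => ∑ p, f (Z p ω)] = t * ∑ y, (∑ i, ((N i : ℝ) / t) * P i y) * f y := by
  rw [integral_finsetSum _ fun p _ => (memLp_comp_of_fintype (hZ p) f 1).integrable le_rfl,
    ← sum_sigma_mul_eq_mul_sum_mixture N ht]
  simp only [integral_comp_eq_sum_measureReal (hZ _), hlaw]

lemma variance_sum_sigma_le_mul_sum_mixture (hZ : ∀ p, Measurable (Z p)) (hind : iIndepFun Z μ)
    (hlaw : ∀ p y, μ.real {ω | Z p ω = y} = P p.1 y) (ht : t ≠ 0) (f : 𝒴 → ℝ) (c : ℝ) :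
    variance (fun ω => ∑ p, f (Z p ω)) μ
      ≤ t * ∑ y, (∑ i, ((N i : ℝ) / t) * P i y) * (f y - c) ^ 2 := by
  rw [← sum_sigma_mul_eq_mul_sum_mixture N ht]
  simpa only [hlaw] using variance_sum_comp_le_sum hZ hind f c

end Mixture

lemma measureReal_mean_add_lt_add_le {Ω : Type*} [MeasurableSpace Ω] {μ : Measure Ω}
    [IsFiniteMeasure μ] {S T : Ω → ℝ} (hS : MemLp S 2 μ) (hT : Integrable T μ) (hT0 : 0 ≤ T)
    {c : ℝ} (hc : 0 < c) :
    μ.real {ω | μ[S] + 2 * c < S ω + T ω} ≤ variance S μ / c ^ 2 + μ[T] / c := by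
  have hsub : {ω | μ[S] + 2 * c < S ω + T ω} ⊆ {ω | c ≤ |S ω - μ[S]|} ∪ {ω | c ≤ T ω} := by
    intro ω hω
    by_contra h
    simp only [Set.mem_union, Set.mem_ofPred_eq, not_or, not_le, abs_lt] at hω h
    linarith
  have hcheb : μ.real {ω | c ≤ |S ω - μ[S]|} ≤ variance S μ / c ^ 2 :=
    ENNReal.toReal_le_of_le_ofReal (div_nonneg (variance_nonneg _ _) (sq_nonneg _))
      (meas_ge_le_variance_div_sq hS hc)
  have hmarkov : μ.real {ω | c ≤ T ω} ≤ μ[T] / c := by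
    rw [le_div_iff₀' hc]
    exact mul_meas_ge_le_integral_of_nonneg (Filter.Eventually.of_forall hT0) hT c
  calc μ.real {ω | μ[S] + 2 * c < S ω + T ω}
      ≤ μ.real ({ω | c ≤ |S ω - μ[S]|} ∪ {ω | c ≤ T ω}) := measureReal_mono hsub
    _ ≤ _ := (measureReal_union_le _ _).trans (add_le_add hcheb hmarkov)

lemma lt_sum_of_inf'_div_sum_lt {ι : Type*} [Fintype ι] [Nonempty ι] {x : ι → ℝ} {m t : ℝ}
    (hm : 0 < m) (hx : ∀ j, m ≤ x j) (ht : 0 < t)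
    (h : Finset.univ.inf' Finset.univ_nonempty (fun j => x j / ∑ l, x l) < m / t) :
    t < ∑ l, x l := by
  have hS : 0 < ∑ l, x l := Finset.sum_pos (fun l _ => hm.trans_le (hx l)) Finset.univ_nonempty
  have hle : m / ∑ l, x l ≤ Finset.univ.inf' Finset.univ_nonempty (fun j => x j / ∑ l, x l) :=
    Finset.le_inf' _ _ fun j _ => div_le_div_of_nonneg_right (hx j) hS.le
  exact (div_lt_div_iff_of_pos_left hm hS ht).mp (hle.trans_lt h)

theorem stmt_11_general (Ω : Type*) [MeasurableSpace Ω] (μ : Measure Ω) [IsProbabilityMeasure μ]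
    (𝒴 : Type*) [Fintype 𝒴] [Nonempty 𝒴] [MeasurableSpace 𝒴] [MeasurableSingletonClass 𝒴]
    (n : ℕ) (Nc : Fin n → ℕ) (Nt : ℕ) (hNtpos : 0 < Nt)
    (Y : ((Σ i : Fin n, Fin (Nc i)) ⊕ Unit) → Ω → 𝒴)
    (hmeas : ∀ j, Measurable (Y j))
    (hind : iIndepFun Y μ)
    (PY : Fin n → 𝒴 → ℝ) (Pstar : 𝒴 → ℝ)
    (hlaw : ∀ (i : Fin n) (k : Fin (Nc i)) (y : 𝒴),
      (μ {ω | Y (Sum.inl ⟨i, k⟩) ω = y}).toReal = PY i y)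
    (hlawstar : ∀ y : 𝒴, (μ {ω | Y (Sum.inr ()) ω = y}).toReal = Pstar y)
    (w : 𝒴 → ℝ) (hw : ∀ y, 0 < w y)
    (Pcal : 𝒴 → ℝ) (hPcal : ∀ y, Pcal y = ∑ i, ((Nc i : ℝ) / Nt) * PY i y)
    (Ew Vw wmin : ℝ)
    (hEw : Ew = ∑ y, Pcal y * w y) (hEwpos : 0 < Ew)
    (hVw : Vw = ∑ y, Pcal y * (w y - Ew) ^ 2)
    (hwmin : wmin = Finset.univ.inf' Finset.univ_nonempty w) :
    (μ {ω | Finset.univ.inf' Finset.univ_nonempty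
        (fun j => w (Y j ω) / ∑ l, w (Y l ω)) < wmin / (2 * Nt * Ew)}).toReal
      ≤ 4 * Vw / (Nt * Ew ^ 2) + 2 * (∑ y, Pstar y * w y) / (Nt * Ew) := by
  set Scal : Ω → ℝ := fun ω => ∑ p, w (Y (Sum.inl p) ω)
  set T : Ω → ℝ := fun ω => w (Y (Sum.inr ()) ω)
  have hNt : (Nt : ℝ) ≠ 0 := by positivity
  have hmean : μ[Scal] = Nt * Ew := by
    rw [integral_sum_sigma_eq_mul_sum_mixture (fun p => hmeas _) (fun p => hlaw p.1 p.2) hNt,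
      hEw]
    simp only [hPcal]
  have hvar : variance Scal μ ≤ Nt * Vw := by
    refine (variance_sum_sigma_le_mul_sum_mixture (fun p => hmeas _)
      (hind.precomp Sum.inl_injective) (fun p => hlaw p.1 p.2) hNt w Ew).trans_eq ?_
    simp only [hVw, hPcal]
  have hT : μ[T] = ∑ y, Pstar y * w y := by
    simp only [T, integral_comp_eq_sum_measureReal (hmeas _), measureReal_def, hlawstar]
  have hwmin_pos : 0 < wmin := hwmin ▸ (Finset.lt_inf'_iff _).2 fun y _ => hw y
  have hsub : {ω | Finset.univ.inf' Finset.univ_nonempty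
      (fun j => w (Y j ω) / ∑ l, w (Y l ω)) < wmin / (2 * Nt * Ew)}
      ⊆ {ω | μ[Scal] + 2 * (Nt * Ew / 2) < Scal ω + T ω} := by
    intro ω hω
    have hlt := lt_sum_of_inf'_div_sum_lt hwmin_pos
      (fun j => hwmin ▸ Finset.inf'_le w (Finset.mem_univ _)) (by positivity) hω
    have hsplit : ∑ l, w (Y l ω) = Scal ω + T ω := by simp [Scal, T, Fintype.sum_sum_type]
    change μ[Scal] + 2 * (Nt * Ew / 2) < Scal ω + T ω
    linarith
  calc (μ _).toReal ≤ μ.real {ω | μ[Scal] + 2 * (Nt * Ew / 2) < Scal ω + T ω} :=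
        measureReal_mono hsub
    _ ≤ variance Scal μ / (Nt * Ew / 2) ^ 2 + μ[T] / (Nt * Ew / 2) :=
        measureReal_mean_add_lt_add_le (memLp_finsetSum _ fun p _ => memLp_comp_of_fintype
          (hmeas _) w 2) ((memLp_comp_of_fintype (hmeas _) w 1).integrable le_rfl)
          (fun ω => (hw _).le) (by positivity)
    _ ≤ Nt * Vw / (Nt * Ew / 2) ^ 2 + (∑ y, Pstar y * w y) / (Nt * Ew / 2) := by
      rw [hT]
      gcongr
    _ = 4 * Vw / (Nt * Ew ^ 2) + 2 * (∑ y, Pstar y * w y) / (Nt * Ew) := by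
      field_simp
      ring

/-- With high probability, the smallest normalized importance weight among all
calibration points and the test point is not too small. -/
theorem stmt_11 (Ω : Type*) [MeasurableSpace Ω] (μ : Measure Ω) [IsProbabilityMeasure μ]
    (𝒴 : Type*) [Fintype 𝒴] [Nonempty 𝒴] [MeasurableSpace 𝒴] [MeasurableSingletonClass 𝒴]
    (n : ℕ) (hn : 0 < n) (Nc : Fin n → ℕ) (Nt : ℕ) (hNt : Nt = ∑ i, Nc i) (hNtpos : 0 < Nt)
    (Y : ((Σ i : Fin n, Fin (Nc i)) ⊕ Unit) → Ω → 𝒴)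
    (hmeas : ∀ j, Measurable (Y j))
    (hind : iIndepFun Y μ)
    (PY : Fin n → 𝒴 → ℝ) (Pstar : 𝒴 → ℝ)
    (hlaw : ∀ (i : Fin n) (k : Fin (Nc i)) (y : 𝒴),
      (μ {ω | Y (Sum.inl ⟨i, k⟩) ω = y}).toReal = PY i y)
    (hlawstar : ∀ y : 𝒴, (μ {ω | Y (Sum.inr ()) ω = y}).toReal = Pstar y)
    (w : 𝒴 → ℝ) (hw : ∀ y, 0 < w y)
    (Pcal : 𝒴 → ℝ) (hPcal : ∀ y, Pcal y = ∑ i, ((Nc i : ℝ) / Nt) * PY i y)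
    (Ew Vw wmin : ℝ)
    (hEw : Ew = ∑ y, Pcal y * w y) (hEwpos : 0 < Ew)
    (hVw : Vw = ∑ y, Pcal y * (w y - Ew) ^ 2)
    (hwmin : wmin = Finset.univ.inf' Finset.univ_nonempty w) :
    (μ {ω | Finset.univ.inf' Finset.univ_nonempty
        (fun j => w (Y j ω) / ∑ l, w (Y l ω)) < wmin / (2 * Nt * Ew)}).toReal
      ≤ 4 * Vw / (Nt * Ew ^ 2) + 2 * (∑ y, Pstar y * w y) / (Nt * Ew) :=
  stmt_11_general Ω μ 𝒴 n Nc Nt hNtpos Y hmeas hind PY Pstar hlaw hlawstar w hw Pcal hPcal Ew Vw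
    wmin hEw hEwpos hVw hwmin
end

section
/- Let $\bar N_{\bar N}^1, \ldots, \bar N_{\bar N}^n$ be the counts of a multinomial random variable with $\bar N$ trials and probabilities $\pi_i = N^i / N$, where $N = \sum_{i=1}^n N^i$ and $2\bar N \le N$. Then $\mathbb{P}\Big( \sum_{i=1}^n (\bar N_{\bar N}^i - N^i)_+ > \frac{7}{4} \log(nN) \sum_{j : N^j < 6\log(nN)} \sqrt{N^j} \Big) \le \frac{1}{N}$, where $(x)_+ = \max(x,0)$. -/
/-!
Union bound over the agents. Agent `i` is flagged when its count reaches
`N^i + (7/4) log(nN) √N^i` if `N^i < 6 log(nN)`, and `N^i + 1` otherwise; if no agent is flagged,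
the total overshoot is at most `(7/4) log(nN) ∑_{small j} √N^j` deterministically. The count of
agent `i` is a sum of `N̄` independent Bernoulli(`N^i/N`) variables with mean at most `N^i/2`, so
the Chernoff bound makes each flag have probability at most `1/(nN)`: with `s = 1` for small
agents (since `e < 3`, the linear terms in `N^i` cancel) and `s = log 2` for large ones (since
`N^i ≥ 6 log(nN)` and `log 2 - 1/2 > 1/6`).
-/

open MeasureTheory ProbabilityTheory Real Finset

section Chernoff

variable {Ω : Type*}

lemma exp_mul_indicator_one (A : Set Ω) (s : ℝ) :
    (fun ω => exp (s * A.indicator 1 ω)) = fun ω => 1 + A.indicator (fun _ => exp s - 1) ω := by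
  funext ω
  by_cases hω : ω ∈ A <;> simp [hω]

variable [MeasurableSpace Ω] {μ : Measure Ω} [IsProbabilityMeasure μ]

lemma mgf_indicator_one {A : Set Ω} (hA : MeasurableSet A) (s : ℝ) :
    mgf (A.indicator 1) μ s = 1 + μ.real A * (exp s - 1) := by
  rw [mgf, exp_mul_indicator_one,
    integral_add (integrable_const 1) ((integrable_const _).indicator hA),
    integral_indicator_const _ hA]
  simp

variable {ι β : Type*} [Fintype ι] [MeasurableSpace β] [MeasurableSingletonClass β]
  [DecidableEq β]

lemma measureReal_le_card_filter_eq_le_exp {M : ι → Ω → β} (hmeas : ∀ j, Measurable (M j))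
    (hind : iIndepFun M μ) {b : β} {p : ℝ} (hp : ∀ j, μ.real {ω | M j ω = b} = p)
    (c : ℝ) {s : ℝ} (hs : 0 ≤ s) :
    μ.real {ω | c ≤ #{j | M j ω = b}} ≤ exp (-s * c + Fintype.card ι * p * (exp s - 1)) := by
  set X : ι → Ω → ℝ := fun j => (M j ⁻¹' {b}).indicator 1
  have hA : ∀ j, MeasurableSet (M j ⁻¹' {b}) := fun j => hmeas j (measurableSet_singleton b)
  have hXmeas : ∀ j, Measurable (X j) := fun j => measurable_one.indicator (hA j)
  have hXind : iIndepFun X μ :=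
    hind.comp (fun _ => ({b} : Set β).indicator 1) fun _ =>
      measurable_one.indicator (measurableSet_singleton b)
  have hcount : ∀ ω, (#{j | M j ω = b} : ℝ) = (∑ j, X j) ω := by
    intro ω
    rw [Finset.sum_apply, natCast_card_filter]
    refine sum_congr rfl fun j _ => ?_
    by_cases h : M j ω = b <;> simp [X, h]
  have hint : ∀ j ∈ univ, Integrable (fun ω => exp (s * X j ω)) μ := fun j _ => by
    rw [exp_mul_indicator_one]
    exact (integrable_const 1).add ((integrable_const _).indicator (hA j))
  have hmgf : ∀ j ∈ univ, mgf (X j) μ s ≤ exp (p * (exp s - 1)) := fun j _ => by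
    rw [mgf_indicator_one (hA j), show μ.real (M j ⁻¹' {b}) = p from hp j]
    linarith [add_one_le_exp (p * (exp s - 1))]
  calc μ.real {ω | c ≤ #{j | M j ω = b}} = μ.real {ω | c ≤ (∑ j, X j) ω} := by
        simp only [hcount]
    _ ≤ exp (-s * c) * mgf (∑ j, X j) μ s :=
        measure_ge_le_exp_mul_mgf c hs (hXind.integrable_exp_mul_sum hXmeas hint)
    _ ≤ exp (-s * c) * ∏ _j : ι, exp (p * (exp s - 1)) := by
        rw [hXind.mgf_sum hXmeas]
        gcongr with j hj
        · exact fun j _ => mgf_nonneg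
        · exact hmgf j hj
    _ = exp (-s * c + Fintype.card ι * p * (exp s - 1)) := by
        rw [prod_const, card_univ, ← exp_nat_mul, ← exp_add]
        ring_nf

noncomputable def overshootThreshold (L x : ℝ) : ℝ :=
  if x < 6 * L then x + 7 / 4 * L * √x else x + 1

lemma measureReal_overshootThreshold_le_card_filter_eq_le_exp_neg {M : ι → Ω → β}
    (hmeas : ∀ j, Measurable (M j)) (hind : iIndepFun M μ) {b : β} {p : ℝ}
    (hp : ∀ j, μ.real {ω | M j ω = b} = p) {x L : ℝ} (hx : 1 ≤ x)
    (hmean : Fintype.card ι * p ≤ x / 2) :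
    μ.real {ω | overshootThreshold L x ≤ #{j | M j ω = b}} ≤ exp (-L) := by
  unfold overshootThreshold
  split_ifs with hsmall
  · refine (measureReal_le_card_filter_eq_le_exp hmeas hind hp _ zero_le_one).trans ?_
    gcongr
    have hL : 0 ≤ L := by linarith
    have hsqrt : 1 ≤ √x := one_le_sqrt.mpr hx
    nlinarith [exp_one_lt_three, exp_one_gt_two, mul_le_mul_of_nonneg_left hsqrt hL]
  · refine (measureReal_le_card_filter_eq_le_exp hmeas hind hp _ (log_nonneg one_le_two)).trans ?_
    rw [exp_log two_pos]
    gcongr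
    nlinarith [log_two_gt_d9]

end Chernoff

lemma natCast_tsub_le_of_lt_overshootThreshold {a b : ℕ} {L : ℝ}
    (h : (b : ℝ) < overshootThreshold L a) :
    ((b - a : ℕ) : ℝ) ≤ if (a : ℝ) < 6 * L then 7 / 4 * L * √a else 0 := by
  unfold overshootThreshold at h
  split_ifs at h ⊢ with hsmall
  · rcases le_total b a with hba | hab
    · have hL : 0 ≤ L := by linarith [(Nat.cast_nonneg a : (0 : ℝ) ≤ a)]
      rw [Nat.sub_eq_zero_of_le hba, Nat.cast_zero]
      positivity
    · rw [Nat.cast_sub hab]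
      linarith
  · have hba : b ≤ a := by exact_mod_cast Nat.lt_succ_iff.mp (by exact_mod_cast h)
    simp [Nat.sub_eq_zero_of_le hba]

lemma sum_tsub_le_of_lt_overshootThreshold {ι : Type*} [Fintype ι] {a b : ι → ℕ} {L : ℝ}
    (h : ∀ i, (b i : ℝ) < overshootThreshold L (a i)) :
    ((∑ i, (b i - a i) : ℕ) : ℝ) ≤ 7 / 4 * L * ∑ i with (a i : ℝ) < 6 * L, √(a i) := by
  rw [mul_sum, sum_filter]
  push_cast
  exact sum_le_sum fun i _ => natCast_tsub_le_of_lt_overshootThreshold (h i)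

open MeasureTheory ProbabilityTheory Classical in
/-- Multinomial overshoot bound: with probability at least `1 - 1/N`, the total
overshoot of the multinomial counts beyond the per-agent capacities is
controlled by the small agents only. -/
theorem stmt_12 (Ω : Type*) [MeasurableSpace Ω] (μ : Measure Ω) [IsProbabilityMeasure μ]
    (n : ℕ) (hn : 0 < n) (Nc : Fin n → ℕ) (hNc : ∀ i, 1 ≤ Nc i)
    (Nt : ℕ) (hNt : Nt = ∑ i, Nc i)
    (Nbar : ℕ) (hNbar : 2 * Nbar ≤ Nt)
    (M : Fin Nbar → Ω → Fin n) (hmeas : ∀ j, Measurable (M j))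
    (hind : iIndepFun M μ)
    (hlaw : ∀ (j : Fin Nbar) (i : Fin n),
      (μ {ω | M j ω = i}).toReal = (Nc i : ℝ) / Nt)
    (B : Fin n → Ω → ℕ)
    (hB : ∀ i ω, B i ω = (Finset.univ.filter (fun j => M j ω = i)).card) :
    (μ {ω | (7 / 4 : ℝ) * Real.log (n * Nt) *
          ∑ j ∈ Finset.univ.filter (fun j => (Nc j : ℝ) < 6 * Real.log (n * Nt)),
            Real.sqrt (Nc j)
        < (∑ i, (B i ω - Nc i) : ℕ)}).toReal ≤ 1 / Nt := by
  set L := Real.log (n * Nt)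
  have hNt_pos : (0 : ℝ) < Nt := by
    rw [hNt, Nat.cast_pos]
    exact (hNc ⟨0, hn⟩).trans (single_le_sum (fun i _ => Nat.zero_le (Nc i)) (mem_univ _))
  have hnNt_pos : (0 : ℝ) < n * Nt := by positivity
  set A : Fin n → Set Ω := fun i => {ω | overshootThreshold L (Nc i) ≤ B i ω}
  have hbad : {ω | 7 / 4 * L * ∑ j with (Nc j : ℝ) < 6 * L, √(Nc j) < (∑ i, (B i ω - Nc i) : ℕ)}
      ⊆ ⋃ i, A i := by
    intro ω hω
    by_contra hgood
    simp only [A, Set.mem_iUnion, Set.mem_ofPred_eq, not_exists, not_le] at hgood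
    exact not_lt_of_ge (sum_tsub_le_of_lt_overshootThreshold hgood) hω
  have htail : ∀ i, μ.real (A i) ≤ exp (-L) := fun i => by
    simp only [A, hB]
    refine measureReal_overshootThreshold_le_card_filter_eq_le_exp_neg hmeas hind (hlaw · i)
      (by exact_mod_cast hNc i) ?_
    rw [Fintype.card_fin, ← mul_div_assoc, div_le_div_iff₀ hNt_pos two_pos]
    have : (2 * Nbar : ℝ) ≤ Nt := by exact_mod_cast hNbar
    nlinarith [(Nat.cast_nonneg (Nc i) : (0 : ℝ) ≤ Nc i)]
  calc μ.real _ ≤ μ.real (⋃ i, A i) := measureReal_mono hbad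
    _ ≤ ∑ i, μ.real (A i) := measureReal_iUnion_fintype_le A
    _ ≤ ∑ _i : Fin n, exp (-L) := sum_le_sum fun i _ => htail i
    _ = 1 / Nt := by
      rw [sum_const, card_univ, Fintype.card_fin, nsmul_eq_mul, exp_neg, exp_log hnNt_pos]
      field_simp
end
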